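/- Let P be an irreducible 3×3 row-stochastic matrix with stationary probability row vector μ, and let Π be a 3×K state-dependent probability matrix with columns φ_k and Λ_k = diag(φ_k). If the underlying Markov chain is irreversible (μ_i·P_{ij} ≠ μ_j·P_{ji} for some i, j) and the rank of Π is 3, then the observed process is irreversible: there exist r ≥ 1, observation symbols s_1, …, s_r and positive integers n_2, …, n_r with μ·Λ_{s_1}·P^{n_2}·Λ_{s_2}·⋯·P^{n_r}·Λ_{s_r}·e ≠ μ·Λ_{s_r}·P^{n_r}·Λ_{s_{r−1}}·⋯·P^{n_2}·Λ_{s_1}·e. -/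
import Mathlib


open Matrix

/-- The matrix product `Λ_{s₀} · P^{n₀} · Λ_{s₁} · ⋯ · P^{n_{r−1}} · Λ_{s_r}`
appearing in the finite-dimensional distributions of the observed process of a
discrete-time hidden Markov model with 1-step transition probability matrix `P`
and state-dependent probability matrix `E`. -/
def obsProdD (P : Matrix (Fin 3) (Fin 3) ℝ) {K : ℕ}
    (E : Matrix (Fin 3) (Fin K) ℝ) {r : ℕ} (s : Fin (r + 1) → Fin K)
    (n : Fin r → ℕ) : Matrix (Fin 3) (Fin 3) ℝ :=
  Matrix.diagonal (fun a => E a (s 0)) *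
    (List.ofFn fun i : Fin r =>
      P ^ n i * Matrix.diagonal fun a => E a (s i.succ)).prod

/-- The trilinear form of a length-3 observation word. -/
def tripT (P : Matrix (Fin 3) (Fin 3) ℝ) {K : ℕ} (E : Matrix (Fin 3) (Fin K) ℝ)
    (μ : Fin 3 → ℝ) (a b c : Fin K) : ℝ :=
  ∑ i, ∑ j, ∑ k, μ i * E i a * P i j * E j b * P j k * E k c

lemma obs_eq_tripT (P : Matrix (Fin 3) (Fin 3) ℝ) {K : ℕ} (E : Matrix (Fin 3) (Fin K) ℝ)
    (μ : Fin 3 → ℝ) (a b c : Fin K) :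
    (μ ᵥ* obsProdD P E ![a,b,c] ![1,1]) ⬝ᵥ (fun _ => (1:ℝ)) = tripT P E μ a b c := by
  simp [obsProdD, tripT, List.ofFn_succ, Matrix.mul_apply, Matrix.vecMul, dotProduct,
    Matrix.diagonal, Fin.sum_univ_three, Finset.sum_mul, Finset.mul_sum]
  ring

lemma tripleswap {α : Type*} [Fintype α] (f : α → α → α → ℝ) :
    ∑ x, ∑ y, ∑ z, f x y z = ∑ z, ∑ y, ∑ x, f x y z := by
  calc ∑ x, ∑ y, ∑ z, f x y z = ∑ y, ∑ x, ∑ z, f x y z := Finset.sum_comm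
    _ = ∑ y, ∑ z, ∑ x, f x y z := Finset.sum_congr rfl (fun y _ => Finset.sum_comm)
    _ = ∑ z, ∑ y, ∑ x, f x y z := Finset.sum_comm

/-- If the underlying irreducible Markov chain is irreversible and
the rank of the state-dependent probability matrix is 3, then the observed process of
the discrete-time three-state hidden Markov model is irreversible. -/
theorem observed_irreversible_of_rank_three_discrete
    (P : Matrix (Fin 3) (Fin 3) ℝ) (μ : Fin 3 → ℝ)
    {K : ℕ} (E : Matrix (Fin 3) (Fin K) ℝ)
    (hP0 : ∀ i j : Fin 3, 0 ≤ P i j)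
    (hP1 : ∀ i : Fin 3, ∑ j, P i j = 1)
    (hirred : ∀ i j : Fin 3, ∃ n : ℕ, 0 < n ∧ 0 < (P ^ n) i j)
    (hpos : ∀ i, 0 < μ i) (hsum : μ 0 + μ 1 + μ 2 = 1)
    (hstat : μ ᵥ* P = μ)
    (hE0 : ∀ a k, 0 ≤ E a k) (hE1 : ∀ a : Fin 3, ∑ k, E a k = 1)
    (hirrev : ∃ i j : Fin 3, μ i * P i j ≠ μ j * P j i)
    (hrank : E.rank = 3) :
    ∃ (r : ℕ) (s : Fin (r + 1) → Fin K) (n : Fin r → ℕ), (∀ i, 1 ≤ n i) ∧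
      (μ ᵥ* obsProdD P E s n) ⬝ᵥ (fun _ => (1 : ℝ)) ≠
        (μ ᵥ* obsProdD P E (s ∘ Fin.rev) (n ∘ Fin.rev)) ⬝ᵥ (fun _ => (1 : ℝ)) := by
  by_contra hcon
  push_neg at hcon
  -- a right inverse of E from the rank hypothesis
  obtain ⟨R, hER⟩ : ∃ R : Fin K → Fin 3 → ℝ,
      ∀ i a, ∑ s, E i s * R s a = if i = a then 1 else 0 := by
    have hrange : LinearMap.range E.mulVecLin = ⊤ := by
      apply Submodule.eq_top_of_finrank_eq
      rw [show Module.finrank ℝ (LinearMap.range E.mulVecLin) = E.rank from rfl, hrank]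
      simp
    obtain ⟨g, hg⟩ := LinearMap.exists_rightInverse_of_surjective E.mulVecLin hrange
    refine ⟨fun s a => g (Pi.single a 1) s, fun i a => ?_⟩
    have h2 := congrFun (LinearMap.congr_fun hg (Pi.single a 1)) i
    simpa [Matrix.mulVecLin_apply, Matrix.mulVec, dotProduct, Pi.single_apply,
      eq_comm] using h2
  -- symmetry of the trilinear form, from the negated conclusion
  have hT : ∀ a b c : Fin K, tripT P E μ a b c = tripT P E μ c b a := by
    intro a b c
    have h := hcon 2 ![a,b,c] ![1,1] (by intro i; fin_cases i <;> norm_num)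
    rw [show (![a,b,c] ∘ Fin.rev) = ![c,b,a] from by funext i; fin_cases i <;> rfl,
        show (![1,1] ∘ Fin.rev : Fin 2 → ℕ) = ![1,1] from by funext i; fin_cases i <;> rfl]
      at h
    rw [obs_eq_tripT, obs_eq_tripT] at h
    exact h
  -- contraction helper
  have hcontr : ∀ (g : Fin 3 → ℝ) (a : Fin 3),
      (∑ s, (∑ i, g i * E i s) * R s a) = g a := by
    intro g a
    have h1 : (∑ s, (∑ i, g i * E i s) * R s a) = ∑ i, g i * ∑ s, E i s * R s a := by
      simp_rw [Finset.sum_mul]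
      rw [Finset.sum_comm]
      simp_rw [mul_assoc, ← Finset.mul_sum]
    rw [h1]
    simp [hER]
  -- contract each tensor index
  have c1 : ∀ (s0 s1 : Fin K) (c' : Fin 3),
      ∑ s2, tripT P E μ s0 s1 s2 * R s2 c'
        = ∑ i, ∑ j, μ i * E i s0 * P i j * E j s1 * P j c' := by
    intro s0 s1 c'
    have h := hcontr (fun k => ∑ i, ∑ j, μ i * E i s0 * P i j * E j s1 * P j k) c'
    rw [← h]
    refine Finset.sum_congr rfl fun s2 _ => ?_
    congr 1
    simp only [tripT, Fin.sum_univ_three]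
    ring
  have c2 : ∀ (s0 : Fin K) (b' c' : Fin 3),
      ∑ s1, (∑ i, ∑ j, μ i * E i s0 * P i j * E j s1 * P j c') * R s1 b'
        = ∑ i, μ i * E i s0 * P i b' * P b' c' := by
    intro s0 b' c'
    have h := hcontr (fun j => ∑ i, μ i * E i s0 * P i j * P j c') b'
    rw [← h]
    refine Finset.sum_congr rfl fun s1 _ => ?_
    congr 1
    simp only [Fin.sum_univ_three]
    ring
  have c3 : ∀ (a' b' c' : Fin 3),
      ∑ s0, (∑ i, μ i * E i s0 * P i b' * P b' c') * R s0 a'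
        = μ a' * P a' b' * P b' c' := by
    intro a' b' c'
    have h := hcontr (fun i => μ i * P i b' * P b' c') a'
    rw [← h]
    refine Finset.sum_congr rfl fun s0 _ => ?_
    congr 1
    refine Finset.sum_congr rfl fun i _ => ?_
    ring
  have hN : ∀ a b c : Fin 3,
      (∑ s0, (∑ s1, (∑ s2, tripT P E μ s0 s1 s2 * R s2 c) * R s1 b) * R s0 a)
        = μ a * P a b * P b c := by
    intro a b c
    rw [← c3 a b c]
    refine Finset.sum_congr rfl fun s0 _ => ?_
    congr 1
    rw [← c2 s0 b c]
    refine Finset.sum_congr rfl fun s1 _ => ?_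
    congr 1
    exact c1 s0 s1 c
  -- the contracted tensor is symmetric
  have hNswap : ∀ a b c : Fin 3,
      (∑ s0, (∑ s1, (∑ s2, tripT P E μ s0 s1 s2 * R s2 c) * R s1 b) * R s0 a)
        = ∑ s0, (∑ s1, (∑ s2, tripT P E μ s0 s1 s2 * R s2 a) * R s1 b) * R s0 c := by
    intro a b c
    calc (∑ s0, (∑ s1, (∑ s2, tripT P E μ s0 s1 s2 * R s2 c) * R s1 b) * R s0 a)
        = ∑ s0, ∑ s1, ∑ s2, tripT P E μ s0 s1 s2 * R s2 c * R s1 b * R s0 a := by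
          simp_rw [Finset.sum_mul]
      _ = ∑ s0, ∑ s1, ∑ s2, tripT P E μ s2 s1 s0 * R s2 c * R s1 b * R s0 a := by
          refine Finset.sum_congr rfl fun s0 _ => Finset.sum_congr rfl fun s1 _ =>
            Finset.sum_congr rfl fun s2 _ => ?_
          rw [hT]
      _ = ∑ s2, ∑ s1, ∑ s0, tripT P E μ s2 s1 s0 * R s2 c * R s1 b * R s0 a :=
          tripleswap _
      _ = ∑ s0, (∑ s1, (∑ s2, tripT P E μ s0 s1 s2 * R s2 a) * R s1 b) * R s0 c := by
          simp_rw [Finset.sum_mul]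
          refine Finset.sum_congr rfl fun s0 _ => Finset.sum_congr rfl fun s1 _ =>
            Finset.sum_congr rfl fun s2 _ => ?_
          ring
  have claim : ∀ a b c : Fin 3, μ a * P a b * P b c = μ c * P c b * P b a := by
    intro a b c
    rw [← hN a b c, hNswap a b c, hN c b a]
  -- from the triple identities, the chain is reversible
  have hrev : ∀ i j : Fin 3, μ i * P i j = μ j * P j i := by
    intro i j
    obtain ⟨c0, -, hc0⟩ := Finset.exists_ne_zero_of_sum_ne_zero
      (show ∑ c, P j c ≠ 0 from by rw [hP1 j]; norm_num)
    have hstatj : ∑ a, μ a * P a j = μ j := by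
      have := congrFun hstat j
      simpa [Matrix.vecMul, dotProduct] using this
    set L := μ c0 * P c0 j / P j c0 with hLd
    have hLa : ∀ a, μ a * P a j = L * P j a := by
      intro a
      rw [hLd, div_mul_eq_mul_div, eq_div_iff hc0]
      linear_combination claim a j c0
    have hsumL : μ j = L := by
      rw [← hstatj]
      calc ∑ a, μ a * P a j = ∑ a, L * P j a := Finset.sum_congr rfl fun a _ => hLa a
        _ = L * ∑ a, P j a := by rw [Finset.mul_sum]
        _ = L := by rw [hP1 j]; ring
    rw [hLa i, ← hsumL]
  obtain ⟨i0, j0, hij⟩ := hirrev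
  exact hij (hrev i0 j0)
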